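/- Consider the NN-accelerated CCG iteration. Let D be a finite set of cardinality N (the extreme points of the first-stage feasible polytope, from which the master problem selects its solution at every iteration), let 𝒰 be a nonempty set (the uncertainty set), and let f : D → 𝒰 → ℝ be the surrogate objective (the neural-network evaluation of the recourse cost). Suppose the sequences (x_k)_{k∈ℕ}, (ξ_k)_{k∈ℕ} and the finite active scenario sets (S_k)_{k∈ℕ} satisfy: x_k ∈ D for all k; ξ_k ∈ 𝒰 and f(x_k, ζ) ≤ f(x_k, ξ_k) for all ζ ∈ 𝒰 (i.e., ξ_k maximizes f(x_k, ·) over 𝒰); S_0 is a nonempty finite subset of 𝒰; and S_{k+1} = S_k ∪ {ξ_k} for all k. Then there exists k with 1 ≤ k ≤ N such that f(x_k, ξ_k) ≤ max_{ζ ∈ S_k} f(x_k, ζ). Consequently, for every ε > 0 the algorithm's continuation test f(x_k, ξ_k) ≥ max_{ζ ∈ S_k} f(x_k, ζ) + ε fails at some iteration k ≤ N, i.e., the algorithm terminates after at most N+1 iterations. -/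
import Mathlib


/-- Finite termination of the NN-accelerated CCG iteration (Proposition 1, abstract form).
`D` is the finite set of extreme points of the first-stage polytope (cardinality `N`),
`𝒰` the uncertainty set, `f` the surrogate (NN) objective, `x` the master-problem
iterates, `ξ` the subproblem worst-case scenarios, and `S` the active scenario sets. -/
theorem nn_ccg_finite_termination
    {𝕏 𝕌 : Type*} [DecidableEq 𝕌]
    (D : Finset 𝕏) (N : ℕ) (hD : D.card = N)
    (𝒰 : Set 𝕌) (h𝒰 : 𝒰.Nonempty)
    (f : 𝕏 → 𝕌 → ℝ)
    (x : ℕ → 𝕏) (ξ : ℕ → 𝕌) (S : ℕ → Finset 𝕌)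
    (hx : ∀ k, x k ∈ D)
    (hξmem : ∀ k, ξ k ∈ 𝒰)
    (hξmax : ∀ k, ∀ ζ ∈ 𝒰, f (x k) ζ ≤ f (x k) (ξ k))
    (hS0ne : (S 0).Nonempty)
    (hS0sub : ↑(S 0) ⊆ 𝒰)
    (hSrec : ∀ k, S (k + 1) = insert (ξ k) (S k)) :
    (∃ k, 1 ≤ k ∧ k ≤ N ∧
        f (x k) (ξ k) ≤ sSup (f (x k) '' ↑(S k))) ∧
    ∀ ε : ℝ, 0 < ε → ∃ k, k ≤ N ∧
        ¬ (sSup (f (x k) '' ↑(S k)) + ε ≤ f (x k) (ξ k)) := by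
  -- monotonicity of S
  have hmono : ∀ j k : ℕ, j ≤ k → S j ⊆ S k := by
    intro j k hjk
    induction k with
    | zero => simp [Nat.le_zero.mp hjk]
    | succ n ih =>
      rcases Nat.lt_or_ge j (n+1) with h | h
      · exact (ih (Nat.lt_succ_iff.mp h)).trans (by rw [hSrec n]; exact Finset.subset_insert _ _)
      · have : j = n + 1 := le_antisymm hjk h
        simp [this]
  have hξS : ∀ j k : ℕ, j < k → ξ j ∈ S k := by
    intro j k hjk
    have : ξ j ∈ S (j+1) := by rw [hSrec j]; exact Finset.mem_insert_self _ _
    exact hmono (j+1) k hjk this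
  -- sSup bound
  have hle : ∀ k : ℕ, ∀ ζ ∈ S k, f (x k) ζ ≤ sSup (f (x k) '' ↑(S k)) := by
    intro k ζ hζ
    apply le_csSup
    · exact (((S k).finite_toSet).image _).bddAbove
    · exact Set.mem_image_of_mem _ hζ
  have key : ∃ k, 1 ≤ k ∧ k ≤ N ∧ f (x k) (ξ k) ≤ sSup (f (x k) '' ↑(S k)) := by
    by_contra hcon
    push_neg at hcon
    -- x is injective on range (N+1)
    have hne : ∀ i j : ℕ, i < j → j ≤ N → x i ≠ x j := by
      intro i j hlt hjN hij
      have hj1 : 1 ≤ j := by omega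
      have h1 : f (x j) (ξ j) ≤ f (x j) (ξ i) := by
        rw [← hij]; exact hξmax i (ξ j) (hξmem j)
      have h2 : f (x j) (ξ i) ≤ sSup (f (x j) '' ↑(S j)) := hle j _ (hξS i j hlt)
      exact absurd (h1.trans h2) (not_le.mpr (hcon j hj1 hjN))
    have hinj : Set.InjOn x ↑(Finset.range (N+1)) := by
      intro i hi j hj hij
      simp only [Finset.coe_range, Set.mem_Iio] at hi hj
      rcases lt_trichotomy i j with h | h | h
      · exact absurd hij (hne i j h (by omega))
      · exact h
      · exact absurd hij.symm (hne j i h (by omega))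
    have := Finset.card_le_card_of_injOn x (fun i _ => hx i) hinj
    simp [hD] at this
  refine ⟨key, fun ε hε => ?_⟩
  obtain ⟨k, hk1, hkN, hk⟩ := key
  exact ⟨k, hkN, fun h => by linarith⟩
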